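/- Let R be an integral domain with 1 that is not a field. Then there exists a weighted simplicial complex (K,w) with weights in R and an n such that H_n(K,w;R) is not isomorphic to H_n(K;R). Specifically, for the path graph on vertices x,y,z with w(x)=w(z)=1, w(y)=a, w([x,y])=w([y,z])=a where a is a nonzero non-unit, H_0(K,w) ≅ R ⊕ R/(a), while H_0(K) ≅ R. -/

import Mathlib

open Finset

/-- An abstract simplicial complex on a vertex type `V`. -/
structure SComplex (V : Type*) where
  faces : Set (Finset V)
  not_empty_mem : ∅ ∉ faces
  down_closed : ∀ {s t : Finset V}, s ∈ faces → t ⊆ s → t.Nonempty → t ∈ faces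

/-- The `n`-dimensional simplices (cardinality `n+1`) of a complex. -/
def SComplex.SimplexOf {V : Type*} (K : SComplex V) (n : ℕ) : Type _ :=
  {s : Finset V // s ∈ K.faces ∧ s.card = n + 1}

/-- The `i`-th face of an `(n+1)`-dimensional simplex: delete its `i`-th vertex
(vertices listed in increasing order). -/
noncomputable def SComplex.face {V : Type*} [LinearOrder V] (K : SComplex V) {n : ℕ}
    (σ : K.SimplexOf (n + 1)) (i : Fin (n + 2)) : K.SimplexOf n := by
  classical
  refine ⟨σ.1.erase (σ.1.orderEmbOfFin σ.2.2 i),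
    K.down_closed σ.2.1 (Finset.erase_subset _ _) ?_, ?_⟩
  · rw [← Finset.card_pos, Finset.card_erase_of_mem (Finset.orderEmbOfFin_mem _ _ _), σ.2.2]
    omega
  · simp [Finset.card_erase_of_mem (Finset.orderEmbOfFin_mem _ _ _), σ.2.2]

/-- The quotient `b / a` in a commutative ring, for `a ∣ b` (an arbitrary choice of
quotient; it is unique when the ring is an integral domain and `a ≠ 0`). -/
noncomputable def dquot {R : Type*} [CommRing R] (b a : R) : R :=
  open Classical in if h : a ∣ b then h.choose else 0

/-- The weighted boundary map `∂ₙ : Cₙ₊₁ → Cₙ` of a weighted simplicial complex `(K, w)`,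
`∂ₙ σ = Σᵢ (w σ / w (dᵢ σ)) (-1)ⁱ dᵢ σ`, with coefficients pushed forward along a ring
homomorphism `g : R →+* S` (take `g = RingHom.id R` for coefficients in `R` itself). -/
noncomputable def wbnd {V R S : Type*} [LinearOrder V] [CommRing R] [CommRing S]
    (g : R →+* S) (K : SComplex V) (w : Finset V → R) (n : ℕ) :
    (K.SimplexOf (n + 1) →₀ S) →ₗ[S] (K.SimplexOf n →₀ S) :=
  Finsupp.lsum S fun σ => LinearMap.toSpanSingleton S _
    (∑ i : Fin (n + 2),
      ((-1 : S) ^ (i : ℕ) * g (dquot (w σ.1) (w (K.face σ i).1))) •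
        Finsupp.single (K.face σ i) (1 : S))

/-- The weighted cycles in degree `n` (in degree `0` every chain is a cycle). -/
noncomputable def wZ {V R S : Type*} [LinearOrder V] [CommRing R] [CommRing S]
    (g : R →+* S) (K : SComplex V) (w : Finset V → R) :
    (n : ℕ) → Submodule S (K.SimplexOf n →₀ S)
  | 0 => ⊤
  | n + 1 => LinearMap.ker (wbnd g K w n)

/-- The weighted homology `Hₙ(K, w) = ker ∂ₙ / im ∂ₙ₊₁` with coefficients in `S`. -/
noncomputable abbrev wH {V R S : Type*} [LinearOrder V] [CommRing R] [CommRing S]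
    (g : R →+* S) (K : SComplex V) (w : Finset V → R) (n : ℕ) :=
  letI : AddCommGroup ↥(wZ g K w n) := inferInstance
  wZ g K w n ⧸ Submodule.comap (wZ g K w n).subtype (LinearMap.range (wbnd g K w n))


/-!
`H₀(K, w)` is presented by the vertices `x, y, z` subject to the boundary relations `y = a x` and
`a z = y`; eliminating `y` leaves `x, z` with the single relation `a (z - x) = 0`, so
`H₀(K, w) ≅ R ⊕ R/(a)`. With all weights `1` the same presentation has `a = 1`, giving `R`.
Since `a ≠ 0` kills the nonzero class `(0, 1)` while `R` is torsion-free, the two are not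
isomorphic.
-/

theorem dquot_eq_of_eq_mul {R : Type*} [CommRing R] {a b c : R} (ha : IsLeftRegular a)
    (h : b = a * c) : dquot b a = c := by
  have hd : a ∣ b := ⟨c, h⟩
  rw [dquot, dif_pos hd]
  exact ha (hd.choose_spec.symm.trans h)

theorem dquot_self {R : Type*} [CommRing R] [IsDomain R] {a : R} (ha : a ≠ 0) : dquot a a = 1 :=
  dquot_eq_of_eq_mul (IsRegular.of_ne_zero ha).left (mul_one a).symm

theorem dquot_one {R : Type*} [CommRing R] (b : R) : dquot b 1 = b :=
  dquot_eq_of_eq_mul isRegular_one.left (one_mul b).symm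

theorem smul_one_quotient_span_singleton_self {R : Type*} [CommRing R] (a : R) :
    a • (1 : R ⧸ Ideal.span {a}) = 0 := by
  rw [Algebra.smul_def, mul_one, Ideal.Quotient.algebraMap_eq, Ideal.Quotient.mk_singleton_self]

theorem not_nonempty_prod_quotient_span_singleton_equiv {R : Type*} [CommRing R] [IsDomain R]
    {a : R} (ha0 : a ≠ 0) (hau : ¬IsUnit a) :
    ¬Nonempty ((R × R ⧸ Ideal.span {a}) ≃ₗ[R] R) := by
  rintro ⟨e⟩
  have : Nontrivial (R ⧸ Ideal.span {a}) :=
    Ideal.Quotient.nontrivial_iff.mpr (mt Ideal.span_singleton_eq_top.mp hau)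
  have htorsion : a • ((0 : R), (1 : R ⧸ Ideal.span {a})) = 0 := by
    rw [Prod.smul_mk, smul_zero, smul_one_quotient_span_singleton_self, Prod.mk_zero_zero]
  have he : e (0, 1) = 0 := by
    refine (mul_eq_zero.mp ?_).resolve_left ha0
    rw [← smul_eq_mul, ← map_smul, htorsion, map_zero]
  exact one_ne_zero (congrArg Prod.snd (e.map_eq_zero_iff.mp he))

open Submodule in
/-- The two factors are spanned by the classes of `b 0` and of `b 2 - b 0`. -/
noncomputable def Module.Basis.quotientPathRelationsEquiv {R M : Type*} [CommRing R]
    [AddCommGroup M] [Module R M] (b : Module.Basis (Fin 3) R M) (a : R) :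
    (M ⧸ span R {b 1 - a • b 0, a • b 2 - b 1}) ≃ₗ[R] R × R ⧸ Ideal.span {a} := by
  set N := span R {b 1 - a • b 0, a • b 2 - b 1}
  have hrel₀ : b 1 - a • b 0 ∈ N := subset_span (by simp)
  have hrel₁ : a • b 2 - b 1 ∈ N := subset_span (by simp)
  refine LinearEquiv.ofLinearMap
    (N.liftQ (b.constr R ![(1, 0), (a, 0), (1, 1)]) ?_)
    (LinearMap.coprod (LinearMap.toSpanSingleton R _ (N.mkQ (b 0)))
      ((Ideal.span {a}).liftQ (LinearMap.toSpanSingleton R _ (N.mkQ (b 2 - b 0))) ?_)) ?_ ?_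
  · rw [span_le, Set.insert_subset_iff, Set.singleton_subset_iff]
    simp only [SetLike.mem_coe, LinearMap.mem_ker, map_sub, map_smul, b.constr_basis]
    simp [smul_one_quotient_span_singleton_self]
  · rw [Ideal.span_le, Set.singleton_subset_iff, SetLike.mem_coe, LinearMap.mem_ker,
      LinearMap.toSpanSingleton_apply, ← map_smul, mkQ_apply, Quotient.mk_eq_zero, smul_sub,
      show a • b 2 - a • b 0 = (b 1 - a • b 0) + (a • b 2 - b 1) by abel]
    exact add_mem hrel₀ hrel₁
  · refine LinearMap.prod_ext (LinearMap.ext_ring ?_) (linearMap_qext _ (LinearMap.ext_ring ?_))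
    · simp [b.constr_basis]
    · simp only [LinearMap.comp_apply, mkQ_apply, LinearMap.coprod_apply, liftQ_apply,
        LinearMap.inr_apply, map_zero, zero_add, LinearMap.toSpanSingleton_apply, one_smul,
        map_sub, b.constr_basis]
      simp
  · refine linearMap_qext _ (b.ext fun i => ?_)
    fin_cases i
    · simp [b.constr_basis]
    · simp only [Fin.mk_one, LinearMap.coe_comp, Function.comp_apply, mkQ_apply, liftQ_apply,
        b.constr_basis, Matrix.cons_val_one, Matrix.cons_val_zero, LinearMap.coprod_apply,
        LinearMap.toSpanSingleton_apply, map_zero, add_zero, LinearMap.id_comp]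
      rw [← Quotient.mk_smul, Submodule.Quotient.eq, ← neg_mem_iff, neg_sub]
      exact hrel₀
    · simp only [Fin.reduceFinMk, LinearMap.coe_comp, Function.comp_apply, mkQ_apply,
        liftQ_apply, b.constr_basis, Matrix.cons_val, LinearMap.coprod_apply,
        LinearMap.toSpanSingleton_apply, one_smul, LinearMap.id_comp]
      rw [← map_one (Ideal.Quotient.mk (Ideal.span {a})), ← Ideal.Quotient.mk_eq_mk,
        liftQ_apply]
      simp

namespace SComplex

variable {V : Type*} [LinearOrder V] (K : SComplex V)

theorem face_zero_val_of_eq_pair {σ : K.SimplexOf 1} {u v : V} (huv : u < v)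
    (hσ : σ.1 = {u, v}) : (K.face σ 0).1 = {v} := by
  obtain ⟨s, hs, hc⟩ := σ
  subst hσ
  simp only [face]
  rw [show (0 : Fin 2) = ⟨0, by norm_num⟩ from rfl, Finset.orderEmbOfFin_zero hc (by norm_num)]
  simp [Finset.min'_insert, huv.le, huv.ne]

theorem face_one_val_of_eq_pair {σ : K.SimplexOf 1} {u v : V} (huv : u < v)
    (hσ : σ.1 = {u, v}) : (K.face σ 1).1 = {u} := by
  obtain ⟨s, hs, hc⟩ := σ
  subst hσ
  simp only [face]
  rw [show (1 : Fin 2) = ⟨2 - 1, by norm_num⟩ from rfl,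
    Finset.orderEmbOfFin_last hc (by norm_num)]
  simp [huv.le, Finset.erase_insert_of_ne huv.ne]

variable {R S : Type*} [CommRing R] [CommRing S]

theorem wbnd_zero_single (g : R →+* S) (w : Finset V → R) (σ : K.SimplexOf 1) :
    wbnd g K w 0 (Finsupp.single σ 1) =
      g (dquot (w σ.1) (w (K.face σ 0).1)) • Finsupp.single (K.face σ 0) 1 -
        g (dquot (w σ.1) (w (K.face σ 1).1)) • Finsupp.single (K.face σ 1) 1 := by
  simp only [wbnd, Finsupp.lsum_single, LinearMap.toSpanSingleton_apply, one_smul]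
  rw [Fin.sum_univ_two]
  simp only [Fin.val_zero, Fin.val_one, pow_zero, pow_one, one_mul, neg_one_mul, neg_smul,
    sub_eq_add_neg]

noncomputable def wHZeroEquiv (g : R →+* S) (w : Finset V → R) :
    wH g K w 0 ≃ₗ[S] (K.SimplexOf 0 →₀ S) ⧸ LinearMap.range (wbnd g K w 0) :=
  Submodule.Quotient.equiv _ _ Submodule.topEquiv <| by
    ext x
    simp only [Submodule.mem_map, Submodule.mem_comap]
    exact ⟨fun ⟨y, hy, hyx⟩ => hyx ▸ hy, fun hx => ⟨⟨x, trivial⟩, hx, rfl⟩⟩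

end SComplex

section PathComplex

variable {K : SComplex (Fin 3)}
  (hK : K.faces = ({({0} : Finset (Fin 3)), {1}, {2}, {0, 1}, {1, 2}} : Set (Finset (Fin 3))))

def pathVertex (i : Fin 3) : K.SimplexOf 0 :=
  ⟨{i}, by rw [hK]; fin_cases i <;> simp, Finset.card_singleton i⟩

def pathEdge01 : K.SimplexOf 1 := ⟨{0, 1}, by rw [hK]; simp, rfl⟩

def pathEdge12 : K.SimplexOf 1 := ⟨{1, 2}, by rw [hK]; simp, rfl⟩

theorem pathVertex_bijective : Function.Bijective (pathVertex hK) := by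
  refine ⟨fun i j h => Finset.singleton_injective (congrArg Subtype.val h), ?_⟩
  rintro ⟨s, hs, hc⟩
  rw [hK] at hs
  rcases hs with rfl | rfl | rfl | rfl | rfl
  exacts [⟨0, rfl⟩, ⟨1, rfl⟩, ⟨2, rfl⟩, absurd hc (by decide), absurd hc (by decide)]

theorem eq_pathEdge01_or_eq_pathEdge12 (σ : K.SimplexOf 1) :
    σ = pathEdge01 hK ∨ σ = pathEdge12 hK := by
  obtain ⟨s, hs, hc⟩ := σ
  rw [hK] at hs
  rcases hs with rfl | rfl | rfl | rfl | rfl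
  exacts [absurd hc (by decide), absurd hc (by decide), absurd hc (by decide), .inl rfl, .inr rfl]

variable (R : Type*) [CommRing R]

noncomputable def pathBasis : Module.Basis (Fin 3) R (K.SimplexOf 0 →₀ R) :=
  Finsupp.basisSingleOne.reindex (Equiv.ofBijective _ (pathVertex_bijective hK)).symm

theorem pathBasis_apply (i : Fin 3) :
    pathBasis hK R i = Finsupp.single (pathVertex hK i) 1 := by
  simp [pathBasis]

variable {R} {S : Type*} [CommRing S] (g : R →+* S) (w : Finset (Fin 3) → R)

theorem wbnd_pathEdge01 :
    wbnd g K w 0 (Finsupp.single (pathEdge01 hK) 1) =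
      g (dquot (w {0, 1}) (w {1})) • Finsupp.single (pathVertex hK 1) 1 -
        g (dquot (w {0, 1}) (w {0})) • Finsupp.single (pathVertex hK 0) 1 := by
  have h₀ : K.face (pathEdge01 hK) 0 = pathVertex hK 1 :=
    Subtype.ext (K.face_zero_val_of_eq_pair (by decide) rfl)
  have h₁ : K.face (pathEdge01 hK) 1 = pathVertex hK 0 :=
    Subtype.ext (K.face_one_val_of_eq_pair (by decide) rfl)
  rw [K.wbnd_zero_single, h₀, h₁]
  rfl

theorem wbnd_pathEdge12 :
    wbnd g K w 0 (Finsupp.single (pathEdge12 hK) 1) =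
      g (dquot (w {1, 2}) (w {2})) • Finsupp.single (pathVertex hK 2) 1 -
        g (dquot (w {1, 2}) (w {1})) • Finsupp.single (pathVertex hK 1) 1 := by
  have h₀ : K.face (pathEdge12 hK) 0 = pathVertex hK 2 :=
    Subtype.ext (K.face_zero_val_of_eq_pair (by decide) rfl)
  have h₁ : K.face (pathEdge12 hK) 1 = pathVertex hK 1 :=
    Subtype.ext (K.face_one_val_of_eq_pair (by decide) rfl)
  rw [K.wbnd_zero_single, h₀, h₁]
  rfl

theorem range_wbnd_path :
    LinearMap.range (wbnd g K w 0) = Submodule.span S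
      {wbnd g K w 0 (Finsupp.single (pathEdge01 hK) 1),
        wbnd g K w 0 (Finsupp.single (pathEdge12 hK) 1)} := by
  rw [LinearMap.range_eq_map, ← Finsupp.basisSingleOne.span_eq, Submodule.map_span,
    ← Set.range_comp]
  congr 1
  ext c
  constructor
  · rintro ⟨σ, rfl⟩
    rcases eq_pathEdge01_or_eq_pathEdge12 hK σ with rfl | rfl <;> simp
  · rintro (rfl | rfl) <;> exact ⟨_, rfl⟩

noncomputable def pathWHZeroEquiv (a : R) (h₀ : dquot (w {0, 1}) (w {1}) = 1)
    (h₁ : dquot (w {0, 1}) (w {0}) = a) (h₂ : dquot (w {1, 2}) (w {2}) = a)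
    (h₃ : dquot (w {1, 2}) (w {1}) = 1) :
    wH (RingHom.id R) K w 0 ≃ₗ[R] R × R ⧸ Ideal.span {a} :=
  (K.wHZeroEquiv _ w).trans <|
    (Submodule.quotEquivOfEq _ _ <| by
      rw [range_wbnd_path hK, wbnd_pathEdge01, wbnd_pathEdge12]
      simp [pathBasis_apply, h₀, h₁, h₂, h₃]).trans
    ((pathBasis hK R).quotientPathRelationsEquiv a)

end PathComplex

/-- Let `R` be an integral domain that is not a field, and `a ∈ R` a
nonzero non-unit.  For the path graph `K` on vertices `x = 0`, `y = 1`, `z = 2` with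
edges `[x,y]`, `[y,z]` and weights `w x = w z = 1`, `w y = w [x,y] = w [y,z] = a`, the
weighted homology satisfies `H₀(K, w) ≅ R ⊕ R/(a)`, while the ordinary homology
(constant weight `1`) satisfies `H₀(K) ≅ R`; in particular `H₀(K, w) ≇ H₀(K)`, so
weighted and unweighted homology over `R` differ for some weighted simplicial complex. -/
theorem weighted_homology_differs_when_not_field {R : Type*} [CommRing R] [IsDomain R]
    (a : R) (ha0 : a ≠ 0) (hau : ¬IsUnit a)
    (K : SComplex (Fin 3))
    (hK : K.faces = ({({0} : Finset (Fin 3)), {1}, {2}, {0, 1}, {1, 2}} :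
      Set (Finset (Fin 3))))
    (w : Finset (Fin 3) → R)
    (hwx : w {0} = 1) (hwz : w {2} = 1) (hwy : w {1} = a)
    (hwxy : w {0, 1} = a) (hwyz : w {1, 2} = a) :
    Nonempty (wH (RingHom.id R) K w 0 ≃ₗ[R] R × (R ⧸ Ideal.span ({a} : Set R)))
    ∧ Nonempty (wH (RingHom.id R) K (fun _ => (1 : R)) 0 ≃ₗ[R] R)
    ∧ ¬ Nonempty (wH (RingHom.id R) K w 0 ≃ₗ[R]
        wH (RingHom.id R) K (fun _ => (1 : R)) 0) := by
  let E := pathWHZeroEquiv hK w a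
    (by rw [hwxy, hwy, dquot_self ha0]) (by rw [hwxy, hwx, dquot_one])
    (by rw [hwyz, hwz, dquot_one]) (by rw [hwyz, hwy, dquot_self ha0])
  let E₁ : wH (RingHom.id R) K (fun _ => (1 : R)) 0 ≃ₗ[R] R :=
    (pathWHZeroEquiv hK _ 1 (dquot_one 1) (dquot_one 1) (dquot_one 1) (dquot_one 1)).trans <|
      ((LinearEquiv.refl R R).prodCongr
        (Submodule.quotEquivOfEq _ _ Ideal.span_singleton_one)).trans LinearEquiv.prodUnique
  exact ⟨⟨E⟩, ⟨E₁⟩, fun ⟨e⟩ =>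
    not_nonempty_prod_quotient_span_singleton_equiv ha0 hau ⟨E.symm.trans (e.trans E₁)⟩⟩
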